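/- arXiv:2010.15646 — 2 statements merged into one kernel-verified Lean document; each statement's English description precedes it below -/
import Mathlib

section
/- Let f : ℝ → ℝ be convex and differentiable, and suppose that for some real number m the graph of f lies above the line x ↦ c + m·x for all x (for some constant c), with equality (tangency) possibly occurring. Then m lies in the closure of the range of f'. -/
/-!
By Darboux's theorem the range of `f'` is an interval. It reaches above every `a < m`: if
`f' ≤ a` everywhere, the mean value theorem gives `f x ≤ f 0 + a x` for `x ≥ 0`, which
eventually falls below `c + m x`. Applied to `x ↦ f (-x)`, this shows it also reaches below
every `a > m`, so `m` is in the closure of that interval.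
-/

open Set Filter

theorem Set.OrdConnected.mem_closure_of_exists_gt_of_exists_lt {S : Set ℝ} (hS : S.OrdConnected)
    {m : ℝ} (hgt : ∀ a < m, ∃ s ∈ S, a < s) (hlt : ∀ b, m < b → ∃ s ∈ S, s < b) :
    m ∈ closure S := by
  rw [Metric.mem_closure_iff]
  intro ε hε
  obtain ⟨s₁, hs₁, hm₁⟩ := hgt (m - ε) (sub_lt_self m hε)
  obtain ⟨s₂, hs₂, hm₂⟩ := hlt (m + ε) (lt_add_of_pos_right m hε)
  rcases lt_or_ge s₁ m with h₁ | h₁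
  · exact ⟨s₁, hs₁, by rw [Real.dist_eq, abs_sub_lt_iff]; constructor <;> linarith⟩
  rcases lt_or_ge m s₂ with h₂ | h₂
  · exact ⟨s₂, hs₂, by rw [Real.dist_eq, abs_sub_lt_iff]; constructor <;> linarith⟩
  exact ⟨m, hS.out hs₂ hs₁ ⟨h₂, h₁⟩, by simpa using hε⟩

theorem exists_lt_deriv_of_add_mul_le {f : ℝ → ℝ} (hf : Differentiable ℝ f) {m c : ℝ}
    (hline : ∀ x, c + m * x ≤ f x) {a : ℝ} (ha : a < m) : ∃ ξ, a < deriv f ξ := by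
  by_contra! hderiv
  have hgrowth : Tendsto (fun x => (m - a) * x) atTop atTop :=
    tendsto_id.const_mul_atTop (sub_pos.2 ha)
  obtain ⟨x, hx, hx₀⟩ :=
    ((hgrowth.eventually_gt_atTop (f 0 - c)).and (eventually_ge_atTop 0)).exists
  have hmvt := image_sub_le_mul_sub_of_deriv_le hf hderiv hx₀
  linarith [hline x]

theorem exists_deriv_lt_of_add_mul_le {f : ℝ → ℝ} (hf : Differentiable ℝ f) {m c : ℝ}
    (hline : ∀ x, c + m * x ≤ f x) {a : ℝ} (ha : m < a) : ∃ ξ, deriv f ξ < a := by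
  have hline_neg : ∀ x, c + -m * x ≤ f (-x) := fun x => by
    simpa only [neg_mul_comm] using hline (-x)
  obtain ⟨ξ, hξ⟩ := exists_lt_deriv_of_add_mul_le (f := fun x => f (-x))
    (hf.comp differentiable_neg) hline_neg (neg_lt_neg ha)
  rw [deriv_comp_neg] at hξ
  exact ⟨-ξ, neg_lt_neg_iff.1 hξ⟩

theorem stmt_1_general (f : ℝ → ℝ)
    (hdiff : Differentiable ℝ f) (m c : ℝ)
    (hline : ∀ x : ℝ, c + m * x ≤ f x) :
    m ∈ closure (Set.range (deriv f)) := by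
  have hdarboux : (range (deriv f)).OrdConnected := by
    simpa only [image_univ] using ordConnected_univ.image_deriv fun x _ => hdiff x
  exact hdarboux.mem_closure_of_exists_gt_of_exists_lt
    (fun a ha => exists_range_iff.2 (exists_lt_deriv_of_add_mul_le hdiff hline ha))
    (fun b hb => exists_range_iff.2 (exists_deriv_lt_of_add_mul_le hdiff hline hb))

/-- If `f` is convex and differentiable and its graph lies above the line
`x ↦ c + m x`, then `m` lies in the closure of the range of `f'`. -/
theorem stmt_1 (f : ℝ → ℝ) (hf : ConvexOn ℝ Set.univ f)
    (hdiff : Differentiable ℝ f) (m c : ℝ)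
    (hline : ∀ x : ℝ, c + m * x ≤ f x) :
    m ∈ closure (Set.range (deriv f)) :=
  stmt_1_general f hdiff m c hline
end

section
/- Let φ be continuous, compactly supported, with 𝟙_{[−1/2,1/2]} ≤ φ ≤ 1+η and supp φ ⊂ [−(1+η)/2, (1+η)/2]. Then for any ξ ∈ ℝ, ℓ ∈ (0, L], and p ∈ [−L, L] (L > 0 fixed): ℓ ∫_ℝ φ(u) e^{−ξℓu} du ≤ e^{ξp} ∫_{[p−ℓ/2, p+ℓ/2]} e^{−ξx} dx + η·C(ξ, L), where C(ξ,L) depends only on ξ and L, and similarly ℓ ∫ φ(u) e^{−ξℓu} du ≥ e^{ξp} ∫_{[p−ℓ/2, p+ℓ/2]} e^{−ξx} dx − η·C(ξ,L). -/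
/-!
Substituting `x = p + ℓ u` turns `e^{ξp} ∫_I e^{-ξx} dx` into `ℓ ∫_{-1/2}^{1/2} e^{-ξℓu} du`,
so the difference of the two sides is `ℓ ∫ (φ - 𝟙_{[-1/2,1/2]}) e^{-ξℓu} du`. The weight
`φ - 𝟙_{[-1/2,1/2]}` is nonnegative, lives where `|u| ≤ 1` (so `e^{-ξℓu} ≤ e^{|ξ|L}` there), and
has total mass at most `(1 + η)² - 1 ≤ 3η`.
-/

open Real MeasureTheory Set
open scoped ENNReal

theorem exp_mul_intervalIntegral_exp_neg_eq (ξ ℓ p : ℝ) :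
    exp (ξ * p) * ∫ x in (p - ℓ / 2)..(p + ℓ / 2), exp (-(ξ * x)) =
      ℓ * ∫ u in (-(1 / 2) : ℝ)..(1 / 2), exp (-(ξ * ℓ * u)) := by
  have hsub := intervalIntegral.smul_integral_comp_mul_add (a := -(1 / 2)) (b := 1 / 2)
    (fun x => exp (-(ξ * x))) ℓ p
  rw [show ℓ * -(1 / 2) + p = p - ℓ / 2 by ring, show ℓ * (1 / 2) + p = p + ℓ / 2 by ring,
    smul_eq_mul] at hsub
  rw [← hsub, mul_left_comm, ← intervalIntegral.integral_const_mul]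
  congr 1
  refine intervalIntegral.integral_congr fun u _ => ?_
  simp only [← exp_add]
  ring_nf

theorem integral_le_mul_measureReal_of_abs_le {α : Type*} [MeasurableSpace α] {μ : Measure α}
    {f : α → ℝ} {K : Set α} {c : ℝ} (hK : μ K ≠ ∞) (hf : ∀ x, |f x| ≤ c)
    (hfK : ∀ x ∉ K, f x = 0) :
    ∫ x, f x ∂μ ≤ c * μ.real K := by
  rw [← setIntegral_eq_integral_of_forall_compl_eq_zero hfK]
  exact (le_abs_self _).trans
    (norm_setIntegral_le_of_norm_le_const (f := f) hK.lt_top fun x _ => hf x)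

theorem abs_integral_mul_sub_setIntegral_le {α : Type*} [MeasurableSpace α] {μ : Measure α}
    {f w : α → ℝ} {s : Set α} {M : ℝ} (hs : MeasurableSet s) (hμs : μ s ≠ ∞)
    (hf : Integrable f μ) (hfw : Integrable (fun x => f x * w x) μ) (hws : IntegrableOn w s μ)
    (hf_nonneg : ∀ x, 0 ≤ f x) (hf_one : ∀ x ∈ s, 1 ≤ f x) (hw : ∀ x, f x ≠ 0 → |w x| ≤ M) :
    |∫ x, f x * w x ∂μ - ∫ x in s, w x ∂μ| ≤ M * (∫ x, f x ∂μ - μ.real s) := by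
  set g : α → ℝ := fun x => f x - s.indicator 1 x with hg
  have hind : Integrable (s.indicator 1) μ :=
    (integrable_indicator_iff hs).2 (integrableOn_const (C := (1 : ℝ)) hμs)
  have hdiff : ∫ x, f x * w x ∂μ - ∫ x in s, w x ∂μ = ∫ x, g x * w x ∂μ := by
    rw [← integral_indicator hs, ← integral_sub hfw (hws.integrable_indicator hs)]
    congr 1
    ext x
    by_cases hx : x ∈ s <;> simp [hg, hx, sub_mul]
  have hbound : ∀ x, ‖g x * w x‖ ≤ M * g x := by
    intro x
    have hg0 : 0 ≤ g x := by
      by_cases hx : x ∈ s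
      · simpa [hg, hx] using hf_one x hx
      · simpa [hg, hx] using hf_nonneg x
    rw [Real.norm_eq_abs, abs_mul, abs_of_nonneg hg0, mul_comm]
    by_cases hfx : f x = 0
    · have hx : x ∉ s := fun hx => by linarith [hf_one x hx]
      simp [hg, hx, hfx]
    · exact mul_le_mul_of_nonneg_right (hw x hfx) hg0
  calc |∫ x, f x * w x ∂μ - ∫ x in s, w x ∂μ|
      ≤ ∫ x, M * g x ∂μ := by
        rw [hdiff]
        exact norm_integral_le_of_norm_le ((hf.sub hind).const_mul M) (ae_of_all _ hbound)
    _ = M * (∫ x, f x ∂μ - μ.real s) := by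
        rw [integral_const_mul, integral_sub hf hind, integral_indicator_one hs]

theorem abs_exp_neg_mul_le {ξ ℓ L u : ℝ} (hℓ : ℓ ∈ Icc 0 L) (hu : |u| ≤ 1) :
    |exp (-(ξ * ℓ * u))| ≤ exp (|ξ| * L) := by
  rw [abs_of_pos (exp_pos _), exp_le_exp]
  calc -(ξ * ℓ * u) ≤ |ξ * ℓ * u| := neg_le_abs _
    _ = |ξ| * ℓ * |u| := by rw [abs_mul, abs_mul, abs_of_nonneg hℓ.1]
    _ ≤ |ξ| * L * 1 := by gcongr; exacts [mul_nonneg (abs_nonneg ξ) (hℓ.1.trans hℓ.2), hℓ.2]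
    _ = |ξ| * L := mul_one _

/-- Comparison of the mollified integral `ℓ∫φ(u)e^{−ξℓu}du` with
`e^{ξp}∫_I e^{−ξx}dx`, `I = [p−ℓ/2, p+ℓ/2]`, up to an error `O(η)` with
constant depending only on `ξ` and `L`. -/
theorem stmt_13 (ξ L : ℝ) (hL : 0 < L) :
    ∃ C > (0:ℝ), ∀ η ∈ Set.Ioo (0:ℝ) 1, ∀ φ : ℝ → ℝ, Continuous φ →
      (∀ u ∈ Set.Icc (-(1/2) : ℝ) (1/2), 1 ≤ φ u) →
      (∀ u : ℝ, 0 ≤ φ u ∧ φ u ≤ 1 + η) →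
      (∀ u : ℝ, φ u ≠ 0 → u ∈ Set.Icc (-((1 + η)/2)) ((1 + η)/2)) →
      ∀ ℓ ∈ Set.Ioc (0:ℝ) L, ∀ p ∈ Set.Icc (-L) L,
        |ℓ * (∫ u : ℝ, φ u * Real.exp (-(ξ * ℓ * u))) -
            Real.exp (ξ * p) * ∫ x in (p - ℓ/2)..(p + ℓ/2), Real.exp (-(ξ * x))| ≤ η * C := by
  refine ⟨3 * L * exp (|ξ| * L), by positivity, ?_⟩
  rintro η ⟨hη0, hη1⟩ φ hφc hφ_one hφ_bound hφ_supp ℓ ⟨hℓ0, hℓL⟩ p -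
  have hφK : ∀ u ∉ Icc (-((1 + η) / 2)) ((1 + η) / 2), φ u = 0 :=
    fun u hu => not_not.1 (mt (hφ_supp u) hu)
  have hφ_cs : HasCompactSupport φ := HasCompactSupport.intro isCompact_Icc hφK
  have hE : Continuous fun u => exp (-(ξ * ℓ * u)) := by fun_prop
  have hφ_mass : ∫ u, φ u ≤ (1 + η) * (1 + η) := by
    calc ∫ u, φ u ≤ (1 + η) * (volume : Measure ℝ).real (Icc (-((1 + η) / 2)) ((1 + η) / 2)) :=
          integral_le_mul_measureReal_of_abs_le measure_Icc_lt_top.ne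
            (fun u => abs_le.2 ⟨by linarith [(hφ_bound u).1], (hφ_bound u).2⟩) hφK
      _ = (1 + η) * (1 + η) := by
          rw [Real.volume_real_Icc, max_eq_left (by linarith)]
          ring
  have key := abs_integral_mul_sub_setIntegral_le (μ := volume) (s := Ioc (-(1 / 2)) (1 / 2))
    measurableSet_Ioc measure_Ioc_lt_top.ne (hφc.integrable_of_hasCompactSupport hφ_cs)
    ((hφc.mul hE).integrable_of_hasCompactSupport hφ_cs.mul_right) hE.integrableOn_Ioc
    (fun u => (hφ_bound u).1) (fun u hu => hφ_one u (Ioc_subset_Icc_self hu))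
    (fun u hu => abs_exp_neg_mul_le ⟨hℓ0.le, hℓL⟩
      (abs_le.2 ⟨by linarith [(hφ_supp u hu).1], by linarith [(hφ_supp u hu).2]⟩))
  rw [Real.volume_real_Ioc, show max (1 / 2 - -(1 / 2) : ℝ) 0 = 1 by norm_num,
    ← intervalIntegral.integral_of_le (by norm_num)] at key
  rw [exp_mul_intervalIntegral_exp_neg_eq, ← mul_sub, abs_mul, abs_of_pos hℓ0]
  calc ℓ * |_| ≤ L * (exp (|ξ| * L) * ((1 + η) * (1 + η) - 1)) := by
        gcongr
        exact key.trans (by gcongr)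
    _ ≤ η * (3 * L * exp (|ξ| * L)) := by
        have := mul_pos (mul_pos hL (exp_pos (|ξ| * L))) hη0
        nlinarith
end
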